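/- Let λ ∈ ℝ and β = (1 − λ)/3. For (z,w,X) ∈ ℝ³ with p(z,w,X) := 1 − 3wX + 3zX² − X³ > 0, set Q(z,w,X) = p(z,w,X)^β. Then: (i) at every point of the open set {p > 0}, (w − z²)∂²_z Q + (1 − zw)∂_z∂_w Q + (z − w²)∂²_w Q − λz∂_z Q − λw∂_w Q = −λX ∂_X Q − X² ∂²_X Q; (ii) for every (z,w) ∈ ℝ² and all X ≠ Y with p(z,w,X) > 0 and p(z,w,Y) > 0, writing Q(X) for Q(z,w,X) and Q′(X) for ∂_X Q(z,w,X), one has Γ(Q(X), Q(Y)) = (XY/2)( Q′(X)Q′(Y) + 3β (Q′(X)Q(Y) − Q(X)Q′(Y))/(X − Y) ), where Γ(f,g) = (w − z²)(∂_z f)(∂_z g) + ((1 − zw)/2)((∂_z f)(∂_w g) + (∂_w f)(∂_z g)) + (z − w²)(∂_w f)(∂_w g) is computed in the variables (z,w) at fixed X, Y. -/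

import Mathlib

/-!
In each of `z`, `w`, `X` the cubic `p` is a polynomial, affine in `z` and in `w`, so every
derivative of `Q = p ^ β` that occurs is a polynomial times `p ^ (β - 1)` or `p ^ (β - 2)`.
Factoring out `p ^ (β - 2)` in (i) and `p(X) ^ (β - 1) p(Y) ^ (β - 1)` in (ii) leaves polynomial
identities in `z, w, X, Y, β`; (i) needs `3β = 1 - λ`, while (ii) holds for every exponent.
-/

noncomputable section

open Filter Topology

/-- Partial derivative in the first variable of a function of two real variables. -/
def pz (f : ℝ → ℝ → ℝ) (z w : ℝ) : ℝ := deriv (fun t => f t w) z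

/-- Partial derivative in the second variable of a function of two real variables. -/
def pw (f : ℝ → ℝ → ℝ) (z w : ℝ) : ℝ := deriv (fun t => f z t) w

/-- The carré du champ `Γ` of the deltoid model, in the real variables `(z,w)`. -/
def Gam (f g : ℝ → ℝ → ℝ) (z w : ℝ) : ℝ :=
  (w - z ^ 2) * pz f z w * pz g z w
    + (1 - z * w) / 2 * (pz f z w * pw g z w + pw f z w * pz g z w)
    + (z - w ^ 2) * pw f z w * pw g z w

/-- The cubic `p(z,w,X) = 1 − 3wX + 3zX² − X³`. -/
def pcub (z w X : ℝ) : ℝ := 1 - 3 * w * X + 3 * z * X ^ 2 - X ^ 3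

theorem deriv_deriv_rpow_const {f f' : ℝ → ℝ} {f'' x γ : ℝ}
    (hf : ∀ t, HasDerivAt f (f' t) t) (hf' : HasDerivAt f' f'' x) (hx : 0 < f x) :
    deriv (fun t => deriv (fun s => f s ^ γ) t) x
      = f'' * γ * f x ^ (γ - 1) + f' x ^ 2 * γ * (γ - 1) * f x ^ (γ - 2) := by
  have hpos : ∀ᶠ t in 𝓝 x, 0 < f t := (hf x).continuousAt.eventually_const_lt hx
  have hev : (fun t => deriv (fun s => f s ^ γ) t) =ᶠ[𝓝 x]
      fun t => f' t * γ * f t ^ (γ - 1) := by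
    filter_upwards [hpos] with t ht using ((hf t).rpow_const (Or.inl ht.ne')).deriv
  rw [hev.deriv_eq]
  refine ((hf'.mul_const γ).mul ((hf x).rpow_const (p := γ - 1) (Or.inl hx.ne'))).deriv.trans ?_
  rw [show γ - 1 - 1 = γ - 2 by ring]
  ring

section Cubic

variable {z w X γ : ℝ}

theorem hasDerivAt_pcub_left (z w X : ℝ) : HasDerivAt (fun t => pcub t w X) (3 * X ^ 2) z :=
  ((((hasDerivAt_id z).const_mul 3).mul_const (X ^ 2)).const_add (1 - 3 * w * X)).sub_const
    (X ^ 3) |>.congr_deriv (by ring)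

theorem hasDerivAt_pcub_mid (z w X : ℝ) : HasDerivAt (fun t => pcub z t X) (-(3 * X)) w :=
  ((((hasDerivAt_id w).const_mul 3).mul_const X).const_sub 1).add_const (3 * z * X ^ 2)
    |>.sub_const (X ^ 3) |>.congr_deriv (by ring)

theorem hasDerivAt_pcub_right (z w X : ℝ) :
    HasDerivAt (fun t => pcub z w t) (3 * (2 * z * X - w - X ^ 2)) X :=
  ((((hasDerivAt_id X).const_mul (3 * w)).const_sub 1).add
    ((hasDerivAt_pow 2 X).const_mul (3 * z))).sub (hasDerivAt_pow 3 X) |>.congr_deriv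
    (by push_cast; ring)

theorem hasDerivAt_deriv_pcub_right (z w X : ℝ) :
    HasDerivAt (fun t => 3 * (2 * z * t - w - t ^ 2)) (6 * (z - X)) X :=
  ((((hasDerivAt_id X).const_mul (2 * z)).sub_const w).sub (hasDerivAt_pow 2 X)).const_mul 3
    |>.congr_deriv (by push_cast; ring)

theorem pz_rpow_pcub (h : 0 < pcub z w X) :
    pz (fun a b => pcub a b X ^ γ) z w = 3 * X ^ 2 * γ * pcub z w X ^ (γ - 1) :=
  ((hasDerivAt_pcub_left z w X).rpow_const (Or.inl h.ne')).deriv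

theorem pw_rpow_pcub (h : 0 < pcub z w X) :
    pw (fun a b => pcub a b X ^ γ) z w = -(3 * X) * γ * pcub z w X ^ (γ - 1) :=
  ((hasDerivAt_pcub_mid z w X).rpow_const (Or.inl h.ne')).deriv

theorem deriv_rpow_pcub (h : 0 < pcub z w X) :
    deriv (fun t => pcub z w t ^ γ) X
      = 3 * (2 * z * X - w - X ^ 2) * γ * pcub z w X ^ (γ - 1) :=
  ((hasDerivAt_pcub_right z w X).rpow_const (Or.inl h.ne')).deriv

theorem pz_pz_rpow_pcub (h : 0 < pcub z w X) :
    pz (pz (fun a b => pcub a b X ^ γ)) z w = 9 * X ^ 4 * γ * (γ - 1) * pcub z w X ^ (γ - 2) :=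
  (deriv_deriv_rpow_const (fun t => hasDerivAt_pcub_left t w X) (hasDerivAt_const z _) h).trans
    (by ring)

theorem pw_pw_rpow_pcub (h : 0 < pcub z w X) :
    pw (pw (fun a b => pcub a b X ^ γ)) z w = 9 * X ^ 2 * γ * (γ - 1) * pcub z w X ^ (γ - 2) :=
  (deriv_deriv_rpow_const (fun t => hasDerivAt_pcub_mid z t X) (hasDerivAt_const w _) h).trans
    (by ring)

theorem deriv_deriv_rpow_pcub (h : 0 < pcub z w X) :
    deriv (fun t => deriv (fun s => pcub z w s ^ γ) t) X
      = 6 * (z - X) * γ * pcub z w X ^ (γ - 1)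
        + 9 * (2 * z * X - w - X ^ 2) ^ 2 * γ * (γ - 1) * pcub z w X ^ (γ - 2) :=
  (deriv_deriv_rpow_const (hasDerivAt_pcub_right z w) (hasDerivAt_deriv_pcub_right z w X) h).trans
    (by ring)

theorem pz_pw_rpow_pcub (h : 0 < pcub z w X) :
    pz (pw (fun a b => pcub a b X ^ γ)) z w
      = -(9 * X ^ 3) * γ * (γ - 1) * pcub z w X ^ (γ - 2) := by
  have hev : (fun t => pw (fun a b => pcub a b X ^ γ) t w) =ᶠ[𝓝 z]
      fun t => -(3 * X) * γ * pcub t w X ^ (γ - 1) := by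
    filter_upwards [(hasDerivAt_pcub_left z w X).continuousAt.eventually_const_lt h]
      with t ht using pw_rpow_pcub ht
  rw [pz, hev.deriv_eq,
    (((hasDerivAt_pcub_left z w X).rpow_const (p := γ - 1) (Or.inl h.ne')).const_mul _).deriv,
    show γ - 1 - 1 = γ - 2 by ring]
  ring

theorem rpow_pcub_sub_one (h : 0 < pcub z w X) :
    pcub z w X ^ (γ - 1) = pcub z w X ^ (γ - 2) * pcub z w X := by
  rw [← Real.rpow_add_one h.ne']; congr 1; ring

end Cubic

theorem deltoid_generator_rpow_pcub (lam z w X : ℝ) (h : 0 < pcub z w X) :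
    let Q : ℝ → ℝ → ℝ → ℝ := fun a b t => pcub a b t ^ ((1 - lam) / 3)
    (w - z ^ 2) * pz (pz (fun a b => Q a b X)) z w
        + (1 - z * w) * pz (pw (fun a b => Q a b X)) z w
        + (z - w ^ 2) * pw (pw (fun a b => Q a b X)) z w
        - lam * z * pz (fun a b => Q a b X) z w
        - lam * w * pw (fun a b => Q a b X) z w
      = -lam * X * deriv (fun t => Q z w t) X
        - X ^ 2 * deriv (fun t => deriv (fun s => Q z w s) t) X := by
  intro Q
  rw [pz_pz_rpow_pcub h, pz_pw_rpow_pcub h, pw_pw_rpow_pcub h, pz_rpow_pcub h, pw_rpow_pcub h,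
    deriv_rpow_pcub h, deriv_deriv_rpow_pcub h, rpow_pcub_sub_one h]
  simp only [pcub]
  ring

theorem Gam_rpow_pcub (γ z w X Y : ℝ) (hXY : X ≠ Y) (hX : 0 < pcub z w X) (hY : 0 < pcub z w Y) :
    let Q : ℝ → ℝ → ℝ → ℝ := fun a b t => pcub a b t ^ γ
    Gam (fun a b => Q a b X) (fun a b => Q a b Y) z w
      = X * Y / 2 *
          (deriv (fun t => Q z w t) X * deriv (fun t => Q z w t) Y
            + 3 * γ * (deriv (fun t => Q z w t) X * Q z w Y
                - Q z w X * deriv (fun t => Q z w t) Y) / (X - Y)) := by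
  intro Q
  have hQ (t : ℝ) (ht : 0 < pcub z w t) : Q z w t = pcub z w t ^ (γ - 1) * pcub z w t := by
    rw [← Real.rpow_add_one ht.ne']; simp only [Q, sub_add_cancel]
  rw [Gam, pz_rpow_pcub hX, pw_rpow_pcub hX, pz_rpow_pcub hY, pw_rpow_pcub hY,
    deriv_rpow_pcub hX, deriv_rpow_pcub hY, hQ X hX, hQ Y hY]
  field_simp [sub_ne_zero_of_ne hXY]
  simp only [pcub]
  ring

theorem stmt_16 (lam β : ℝ) (hβ : β = (1 - lam) / 3)
    (Q : ℝ → ℝ → ℝ → ℝ) (hQ : ∀ z w X, Q z w X = pcub z w X ^ β) :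
    (∀ z w X : ℝ, 0 < pcub z w X →
      (w - z ^ 2) * pz (pz (fun a b => Q a b X)) z w
        + (1 - z * w) * pz (pw (fun a b => Q a b X)) z w
        + (z - w ^ 2) * pw (pw (fun a b => Q a b X)) z w
        - lam * z * pz (fun a b => Q a b X) z w
        - lam * w * pw (fun a b => Q a b X) z w
      = -lam * X * deriv (fun t => Q z w t) X
        - X ^ 2 * deriv (fun t => deriv (fun s => Q z w s) t) X) ∧
    (∀ z w X Y : ℝ, X ≠ Y → 0 < pcub z w X → 0 < pcub z w Y →
      Gam (fun a b => Q a b X) (fun a b => Q a b Y) z w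
        = X * Y / 2 *
            (deriv (fun t => Q z w t) X * deriv (fun t => Q z w t) Y
              + 3 * β * (deriv (fun t => Q z w t) X * Q z w Y
                  - Q z w X * deriv (fun t => Q z w t) Y) / (X - Y))) := by
  obtain rfl : Q = fun a b t => pcub a b t ^ β := funext₃ hQ
  subst hβ
  exact ⟨deltoid_generator_rpow_pcub lam, Gam_rpow_pcub _⟩
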